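/- arXiv:1805.01953 — 2 statements merged into one kernel-verified Lean document; each statement's English description precedes it below -/
import Mathlib

section
/- Let G be a good connected graph with at least two vertices and let O = [v_1,…,v_n] be a connected order of V(G). Then the greedy colouring algorithm starting with colour 2 applied to (G,O) (i.e., v_1 receives colour 2, and each subsequent vertex receives the smallest positive integer not used by its already-coloured neighbours) produces an optimal colouring of G: every vertex receives a colour at most χ(G). -/
open Classical in
noncomputable def greedyStep {V : Type*} (G : SimpleGraph V) (f : V → ℕ) (v : V) : V → ℕ :=
  fun u => if u = v then sInf {c : ℕ | 1 ≤ c ∧ ∀ w, G.Adj v w → f w ≠ c} else f u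

noncomputable def greedyFrom {V : Type*} (G : SimpleGraph V) (f : V → ℕ) (l : List V) : V → ℕ :=
  l.foldl (greedyStep G) f

noncomputable def greedy {V : Type*} (G : SimpleGraph V) (l : List V) : V → ℕ :=
  greedyFrom G (fun _ => 0) l

open Classical in
noncomputable def greedyStart2 {V : Type*} (G : SimpleGraph V) : List V → V → ℕ
  | [] => fun _ => 0
  | v :: rest => greedyFrom G (fun u => if u = v then 2 else 0) rest

noncomputable def chi {V : Type*} [Fintype V] (G : SimpleGraph V) : ℕ :=
  sInf {n : ℕ | G.Colorable n}

open Classical in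
noncomputable def idx {V : Type*} (l : List V) (v : V) : ℕ := l.idxOf v

noncomputable def maxIdx {V : Type*} (l : List V) (A : Set V) : ℕ := sSup (idx l '' A)
noncomputable def minIdx {V : Type*} (l : List V) (A : Set V) : ℕ := sInf (idx l '' A)

def IsConnOrder {V : Type*} (G : SimpleGraph V) (l : List V) : Prop :=
  l.Nodup ∧ (∀ v : V, v ∈ l) ∧
    ∀ i : Fin l.length, 0 < i.1 → ∃ j : Fin l.length, j.1 < i.1 ∧ G.Adj (l.get j) (l.get i)

def GoodOrder {V : Type*} [Fintype V] (G : SimpleGraph V) (l : List V) : Prop :=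
  ∀ v : V, greedy G l v ≤ chi G

def Good {V : Type*} [Fintype V] (G : SimpleGraph V) : Prop :=
  ∀ s : Finset V, (G.induce (↑s : Set V)).Connected →
    ∀ l : List ↥(↑s : Set V), IsConnOrder (G.induce (↑s : Set V)) l →
      GoodOrder (G.induce (↑s : Set V)) l

def BadOrder {V : Type*} [Fintype V] (G : SimpleGraph V) (l : List V) : Prop :=
  IsConnOrder G l ∧ ¬ GoodOrder G l

def MinimallyBad {V : Type*} [Fintype V] (G : SimpleGraph V) : Prop :=
  ¬ Good G ∧ ∀ s : Finset V, s ≠ Finset.univ →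
    (G.induce (↑s : Set V)).Connected → Good (G.induce (↑s : Set V))

def IsInducedPath {V : Type*} (G : SimpleGraph V) (P : List V) : Prop :=
  P.Nodup ∧ ∀ i j : Fin P.length,
    G.Adj (P.get i) (P.get j) ↔ (i.1 + 1 = j.1 ∨ j.1 + 1 = i.1)

def IsFlatPath {V : Type*} (G : SimpleGraph V) (P : List V) : Prop :=
  IsInducedPath G P ∧
    ∀ i : Fin P.length, 0 < i.1 → i.1 + 1 < P.length → (G.neighborSet (P.get i)).ncard = 2

def WellOrderedPath {V : Type*} (l P : List V) : Prop :=
  P.Pairwise (fun u v => idx l u < idx l v) ∨ P.Pairwise (fun u v => idx l v < idx l u)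

def IsMaxFlatPath {V : Type*} (G : SimpleGraph V) (P : List V) : Prop :=
  IsFlatPath G P ∧ ∀ h : P ≠ [],
    (G.neighborSet (P.head h)).ncard ≠ 2 ∧ (G.neighborSet (P.getLast h)).ncard ≠ 2

def ClawFree {V : Type*} (G : SimpleGraph V) : Prop :=
  ∀ a b c d : V, G.Adj a b → G.Adj a c → G.Adj a d → b ≠ c → b ≠ d → c ≠ d →
    G.Adj b c ∨ G.Adj b d ∨ G.Adj c d

def IsHole {V : Type*} (G : SimpleGraph V) (C : List V) : Prop :=
  4 ≤ C.length ∧ C.Nodup ∧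
    ∀ i j : Fin C.length, G.Adj (C.get i) (C.get j) ↔
      ((i.1 + 1) % C.length = j.1 ∨ (j.1 + 1) % C.length = i.1)

def GemFree {V : Type*} (G : SimpleGraph V) : Prop :=
  ¬ ∃ a b c d e : V, G.Adj a b ∧ G.Adj b c ∧ G.Adj c d ∧
    ¬ G.Adj a c ∧ ¬ G.Adj a d ∧ ¬ G.Adj b d ∧
    G.Adj e a ∧ G.Adj e b ∧ G.Adj e c ∧ G.Adj e d

/-!
Because `v₁v₂` is an edge, greedy started with colour 2 along `v₁, v₂, v₃, …` gives `v₂` colour 1 and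
`v₁` colour 2, exactly as ordinary greedy does along the swapped order `v₂, v₁, v₃, …`; from then on the two
runs coincide. The swapped order is again connected, and goodness applied to the induced subgraph on all of
`V` says that ordinary greedy is optimal along it.
-/

section

variable {V W : Type*} {G : SimpleGraph V} {H : SimpleGraph W}

theorem greedyStep_of_ne (f : V → ℕ) {u v : V} (h : u ≠ v) : greedyStep G f v u = f u :=
  if_neg h

theorem greedyStep_self_eq {f : V → ℕ} {v : V} {c : ℕ} (hc : 1 ≤ c)
    (hfree : ∀ w, G.Adj v w → f w ≠ c)
    (hused : ∀ c', 1 ≤ c' → c' < c → ∃ w, G.Adj v w ∧ f w = c') :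
    greedyStep G f v v = c := by
  refine (if_pos rfl).trans (IsLeast.csInf_eq ⟨⟨hc, hfree⟩, fun c' ⟨hc', hfree'⟩ => ?_⟩)
  by_contra! hlt
  obtain ⟨w, hw, hfw⟩ := hused c' hc' hlt
  exact hfree' w hw hfw

theorem greedyStep_map_iso (e : G ≃g H) (f : V → ℕ) (v : V) :
    greedyStep H (f ∘ e.symm) (e v) = greedyStep G f v ∘ e.symm := by
  funext u
  obtain ⟨x, rfl⟩ := e.surjective u
  by_cases hx : x = v
  · subst hx
    simp only [greedyStep, Function.comp_apply, RelIso.symm_apply_apply, if_pos, e.surjective.forall,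
      SimpleGraph.Iso.map_adj_iff]
  · simp only [greedyStep, Function.comp_apply, RelIso.symm_apply_apply, hx, e.injective.ne hx,
      if_false]

theorem greedyFrom_map_iso (e : G ≃g H) (l : List V) (f : V → ℕ) :
    greedyFrom H (f ∘ e.symm) (l.map e) = greedyFrom G f l ∘ e.symm := by
  induction l generalizing f with
  | nil => rfl
  | cons a t ih =>
    simp only [greedyFrom, List.map_cons, List.foldl_cons] at ih ⊢
    rw [greedyStep_map_iso, ih]

theorem greedy_map_iso (e : G ≃g H) (l : List V) (v : V) :
    greedy H (l.map e) (e v) = greedy G l v :=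
  (congrFun (greedyFrom_map_iso e l fun _ => 0) (e v)).trans
    (congrArg (greedyFrom G _ l) (e.symm_apply_apply v))

theorem chi_congr [Fintype V] [Fintype W] (e : G ≃g H) : chi G = chi H := by
  simp only [chi]
  congr 1
  ext n
  exact ⟨SimpleGraph.Colorable.of_hom e.symm.toHom, SimpleGraph.Colorable.of_hom e.toHom⟩

theorem IsConnOrder.map_iso {l : List V} (hl : IsConnOrder G l) (e : G ≃g H) :
    IsConnOrder H (l.map e) := by
  obtain ⟨hnd, hmem, hadj⟩ := hl
  refine ⟨hnd.map e.injective, fun w => List.mem_map.2 ⟨e.symm w, hmem _, by simp⟩, ?_⟩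
  intro i hi
  obtain ⟨j, hji, hj⟩ := hadj (i.cast (List.length_map _)) hi
  exact ⟨j.cast (List.length_map _).symm, hji, by simpa [SimpleGraph.Iso.map_adj_iff] using hj⟩

theorem IsConnOrder.adj_of_cons_cons {a b : V} {t : List V} (hl : IsConnOrder G (a :: b :: t)) :
    G.Adj a b := by
  obtain ⟨⟨_ | j, _⟩, hj, hab⟩ := hl.2.2 ⟨1, by simp⟩ one_pos
  · exact hab
  · exact absurd hj (by simp)

theorem IsConnOrder.swap {a b : V} {t : List V} (hl : IsConnOrder G (a :: b :: t)) :
    IsConnOrder G (b :: a :: t) := by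
  obtain ⟨hnd, hmem, hadj⟩ := hl
  refine ⟨(List.Perm.swap b a t).nodup_iff.1 hnd, fun v => (List.Perm.swap b a t).mem_iff.1 (hmem v),
    ?_⟩
  rintro ⟨_ | _ | i, hi⟩ hpos
  · exact absurd hpos (lt_irrefl 0)
  · exact ⟨⟨0, by simp⟩, one_pos, (IsConnOrder.adj_of_cons_cons ⟨hnd, hmem, hadj⟩).symm⟩
  · obtain ⟨⟨_ | _ | j, hj⟩, hji, hadj⟩ := hadj ⟨i + 2, hi⟩ hpos
    · exact ⟨⟨1, by simp⟩, by simp, hadj⟩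
    · exact ⟨⟨0, by simp⟩, by simp, hadj⟩
    · exact ⟨⟨j + 2, hj⟩, hji, hadj⟩

theorem greedyStart2_cons_cons {a b : V} (hab : G.Adj a b) (t : List V) :
    greedyStart2 G (a :: b :: t) = greedy G (b :: a :: t) := by
  classical
  have hb : greedyStep G (fun _ => 0) b b = 1 :=
    greedyStep_self_eq le_rfl (by simp) (by omega)
  have hb' : greedyStep G (fun u => if u = a then 2 else 0) b b = 1 :=
    greedyStep_self_eq le_rfl (fun w _ => by split <;> simp) (by omega)
  have ha : greedyStep G (greedyStep G (fun _ => 0) b) a a = 2 := by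
    refine greedyStep_self_eq (by norm_num) (fun w _ => ?_) fun c _ _ => ⟨b, hab, by omega⟩
    by_cases hw : w = b
    · simp [hw, hb]
    · simp [greedyStep_of_ne _ hw]
  show greedyFrom G (greedyStep G _ b) t = greedyFrom G (greedyStep G (greedyStep G _ b) a) t
  congr 1
  funext u
  by_cases hua : u = a
  · subst hua
    rw [ha, greedyStep_of_ne _ hab.ne, if_pos rfl]
  by_cases hub : u = b
  · subst hub
    rw [hb', greedyStep_of_ne _ hab.ne', hb]
  · rw [greedyStep_of_ne _ hub, greedyStep_of_ne _ hua, greedyStep_of_ne _ hub, if_neg hua]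

theorem Good.goodOrder [Fintype V] (hG : Good G) (hconn : G.Connected) {l : List V}
    (hl : IsConnOrder G l) : GoodOrder G l := by
  let e : G.induce ((Finset.univ : Finset V) : Set V) ≃g G :=
    ⟨Equiv.subtypeUnivEquiv (by simp), Iff.rfl⟩
  intro v
  have h := hG Finset.univ (e.connected_iff.2 hconn) (l.map e.symm) (hl.map_iso e.symm) (e.symm v)
  rwa [greedy_map_iso, chi_congr e] at h

end

theorem List.card_le_length_of_forall_mem {α : Type*} [Fintype α] {l : List α} (h : ∀ a, a ∈ l) :
    Fintype.card α ≤ l.length := by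
  classical
  calc Fintype.card α = Finset.univ.card := rfl
    _ ≤ l.toFinset.card := Finset.card_le_card fun a _ => List.mem_toFinset.2 (h a)
    _ ≤ l.length := List.toFinset_card_le l

/-- greedy starting with colour 2 on a good connected graph is optimal. -/
theorem stmt1 {V : Type*} [Fintype V] (G : SimpleGraph V)
    (hgood : Good G) (hconn : G.Connected) (hcard : 2 ≤ Fintype.card V)
    (l : List V) (hl : IsConnOrder G l) :
    ∀ v : V, greedyStart2 G l v ≤ chi G := by
  match l, hl, (List.card_le_length_of_forall_mem hl.2.1).trans' hcard with
  | a :: b :: t, hl, _ =>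
    rw [greedyStart2_cons_cons hl.adj_of_cons_cons]
    exact hgood.goodOrder hconn hl.swap
end

section
/- Let G be a minimally bad graph and O a bad connected order of G with greedy colouring π = π_{G,O}. Suppose S is a clique cutset of G and C is a connected component of G∖S such that max(S) < min(C), and set v = min(C). If v is adjacent to every vertex of S, then there exists u ∈ S ∪ {v} such that π(u) > |S| + 1. -/
/-! If every vertex of the clique `S ∪ {v}` had colour at most `|S| + 1`, these colours would be
exactly `1, …, |S| + 1`. Listing `S ∪ {v}` by increasing colour and then the rest of `C` in the
order `O` gives a connected order of `G[S ∪ C]` on which greedy reproduces `π`. Restricting `O`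
to `G ∖ C` also gives a connected order reproducing `π`, because every edge leaving `C` ends in
`S`, which precedes `C`. Both subgraphs are proper and connected, hence good by minimality, so
`π ≤ χ(G)` everywhere, contradicting that `O` is bad. -/

section Idx

variable {V : Type*}

-- `idx` is `List.idxOf` for the classical `BEq` instance, so the API needed is restated for it.

lemma idx_le_length (L : List V) (x : V) : idx L x ≤ L.length := by
  classical
  exact List.idxOf_le_length

lemma idx_lt_length_iff {L : List V} {x : V} : idx L x < L.length ↔ x ∈ L := by
  classical
  exact List.idxOf_lt_length_iff

lemma mem_of_idx_lt {L : List V} {w x : V} (h : idx L w < idx L x) : w ∈ L :=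
  idx_lt_length_iff.mp (h.trans_le (idx_le_length L x))

lemma idx_inj {L : List V} {x y : V} (hx : x ∈ L) : idx L x = idx L y ↔ x = y := by
  classical
  exact List.idxOf_inj hx

lemma idx_getElem {L : List V} (hL : L.Nodup) (i : ℕ) (h : i < L.length) : idx L L[i] = i := by
  classical
  exact hL.idxOf_getElem i h

lemma getElem_idx {L : List V} {x : V} (h : idx L x < L.length) : L[idx L x] = x := by
  classical
  exact List.getElem_idxOf h

open Classical in
lemma idx_cons (L : List V) (a x : V) :
    idx (a :: L) x = if a = x then 0 else idx L x + 1 := by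
  simp [idx, List.idxOf_cons]

lemma idx_append_of_mem {P R : List V} {x : V} (h : x ∈ P) : idx (P ++ R) x = idx P x := by
  classical
  exact List.idxOf_append_of_mem h

lemma idx_append_of_not_mem {P R : List V} {x : V} (h : x ∉ P) :
    idx (P ++ R) x = P.length + idx R x := by
  classical
  exact List.idxOf_append_of_notMem h

lemma idx_map {W : Type*} {f : W → V} (hf : f.Injective) (L : List W) (x : W) :
    idx (L.map f) (f x) = idx L x := by
  induction L with
  | nil => rfl
  | cons a L ih =>
    by_cases h : a = x
    · simp [idx_cons, h]
    · simp [idx_cons, ih, h, hf.ne h]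

lemma List.Sublist.idx_lt_idx_iff {L L' : List V} (h : L'.Sublist L) (hL : L.Nodup) {a b : V}
    (ha : a ∈ L') (hb : b ∈ L') : idx L' a < idx L' b ↔ idx L a < idx L b := by
  induction h with
  | slnil => simp at ha
  | cons x h ih =>
    have hx : ∀ y ∈ _, x ≠ y := fun y hy hxy =>
      (List.nodup_cons.mp hL).1 (hxy ▸ h.subset hy)
    simp [idx_cons, hx a ha, hx b hb, ih (List.nodup_cons.mp hL).2 ha hb]
  | cons_cons x h ih =>
    have hnd := List.nodup_cons.mp hL
    by_cases hax : x = a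
    · subst hax
      by_cases hbx : x = b
      · simp [hbx]
      · simp [idx_cons, hbx]
    · by_cases hbx : x = b
      · simp [idx_cons, hbx]
      · have ha' : a ∈ _ := (List.mem_cons.mp ha).resolve_left (Ne.symm hax)
        have hb' : b ∈ _ := (List.mem_cons.mp hb).resolve_left (Ne.symm hbx)
        simp [idx_cons, hax, hbx, ih hnd.2 ha' hb']

lemma List.Pairwise.idx_lt_idx {r : V → V → Prop} {L : List V} (hL : L.Pairwise r) {a b : V}
    (ha : a ∈ L) (hb : b ∈ L) (hne : a ≠ b) (hba : ¬ r b a) : idx L a < idx L b := by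
  induction hL with
  | nil => simp at ha
  | @cons x L hx hL ih =>
    by_cases hax : x = a
    · subst hax
      simp [idx_cons, hne]
    · by_cases hbx : x = b
      · subst hbx
        exact absurd (hx a ((List.mem_cons.mp ha).resolve_left (Ne.symm hax))) hba
      · simp [idx_cons, hax, hbx, ih ((List.mem_cons.mp ha).resolve_left (Ne.symm hax))
          ((List.mem_cons.mp hb).resolve_left (Ne.symm hbx))]

end Idx

section Greedy

variable {V : Type*}

noncomputable def firstFit (G : SimpleGraph V) (L : List V) (F : V → ℕ) (x : V) : ℕ :=
  sInf {c | 1 ≤ c ∧ ∀ w, G.Adj x w → idx L w < idx L x → F w ≠ c}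

variable {G : SimpleGraph V}

lemma firstFit_spec (L : List V) (F : V → ℕ) (x : V) :
    1 ≤ firstFit G L F x ∧
      ∀ w, G.Adj x w → idx L w < idx L x → F w ≠ firstFit G L F x := by
  refine Nat.sInf_mem (s := {c | 1 ≤ c ∧ ∀ w, G.Adj x w → idx L w < idx L x → F w ≠ c})
    ⟨(L.map F).sum + 1, Nat.le_add_left 1 _, fun w _ hw => ?_⟩
  have := List.le_sum_of_mem (List.mem_map_of_mem (f := F) (mem_of_idx_lt hw))
  omega

lemma firstFit_congr {L L' : List V} {F F' : V → ℕ} {x : V}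
    (hidx : ∀ w, G.Adj x w → (idx L w < idx L x ↔ idx L' w < idx L' x))
    (hF : ∀ w, G.Adj x w → idx L w < idx L x → F w = F' w) :
    firstFit G L F x = firstFit G L' F' x := by
  unfold firstFit
  congr 1
  ext c
  refine and_congr_right fun _ => forall_congr' fun w => forall_congr' fun hw => ?_
  rw [← hidx w hw]
  exact imp_congr_right fun h => by rw [hF w hw h]

lemma greedyFrom_of_not_mem (f : V → ℕ) {L : List V} {u : V} (hu : u ∉ L) :
    greedyFrom G f L u = f u := by
  induction L generalizing f with
  | nil => rfl
  | cons x L ih =>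
    rw [List.mem_cons, not_or] at hu
    exact (ih _ hu.2).trans (if_neg hu.1)

lemma greedy_eq_firstFit {L : List V} (hL : L.Nodup) {x : V} (hx : x ∈ L) :
    greedy G L x = firstFit G L (greedy G L) x := by
  obtain ⟨A, B, rfl⟩ := List.append_of_mem hx
  obtain ⟨hxA, hxB⟩ : x ∉ A ∧ x ∉ B := by
    simpa using (List.nodup_cons.mp (List.nodup_middle.mp hL)).1
  have hsplit : greedy G (A ++ x :: B) = greedyFrom G (greedyStep G (greedy G A) x) B := by
    simp [greedy, greedyFrom, List.foldl_append]
  rw [hsplit, greedyFrom_of_not_mem _ hxB, greedyStep, if_pos rfl, ← hsplit, firstFit]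
  congr 1
  ext c
  refine and_congr_right fun hc => forall_congr' fun w => forall_congr' fun _ => ?_
  rw [idx_append_of_not_mem hxA, idx_cons, if_pos rfl]
  by_cases hwA : w ∈ A
  · have hwB : w ∉ x :: B := fun h => List.disjoint_of_nodup_append hL hwA h
    rw [idx_append_of_mem hwA, hsplit, greedyFrom_of_not_mem _ (mt (List.mem_cons_of_mem x) hwB),
      greedyStep, if_neg fun h : w = x => hwB (h ▸ List.mem_cons_self)]
    simp [idx_lt_length_iff.mpr hwA]
  · -- `w` is still uncoloured, i.e. carries `0`, which is never a candidate colour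
    rw [idx_append_of_not_mem hwA, greedy, greedyFrom_of_not_mem _ hwA]
    simp only [ne_eq]
    omega

lemma greedy_eq_of_forall_eq_firstFit {L : List V} (hL : L.Nodup) {F : V → ℕ}
    (hF : ∀ x ∈ L, F x = firstFit G L F x) {x : V} (hx : x ∈ L) : greedy G L x = F x := by
  induction hn : idx L x using Nat.strong_induction_on generalizing x with
  | _ n ih =>
  rw [greedy_eq_firstFit hL hx, hF x hx]
  refine firstFit_congr (fun _ _ => Iff.rfl) fun w _ hw => ?_
  exact ih _ (hn ▸ hw) (mem_of_idx_lt hw) rfl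

lemma one_le_greedy {L : List V} (hL : L.Nodup) {x : V} (hx : x ∈ L) : 1 ≤ greedy G L x :=
  (greedy_eq_firstFit hL hx).symm ▸ (firstFit_spec L _ x).1

lemma greedy_ne_of_adj {L : List V} (hL : L.Nodup) {x y : V} (hx : x ∈ L) (hy : y ∈ L)
    (hxy : G.Adj x y) : greedy G L x ≠ greedy G L y := by
  wlog h : idx L y < idx L x generalizing x y
  · have hne : idx L x ≠ idx L y := mt (idx_inj hx).mp (G.ne_of_adj hxy)
    exact (this hy hx hxy.symm (by omega)).symm
  rw [greedy_eq_firstFit hL hx]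
  exact ((firstFit_spec L _ x).2 y hxy h).symm

lemma greedy_map_embedding {W : Type*} {H : SimpleGraph W} (e : H ↪g G) {M : List W}
    (hM : M.Nodup) {y : W} (hy : y ∈ M) : greedy G (M.map e) (e y) = greedy H M y := by
  have hMe : (M.map e).Nodup := hM.map e.injective
  refine (greedy_eq_of_forall_eq_firstFit (F := fun z => greedy G (M.map e) (e z)) hM
    (fun z hz => ?_) hy).symm
  rw [greedy_eq_firstFit hMe (List.mem_map_of_mem hz), firstFit, firstFit]
  congr 1
  ext c
  refine and_congr_right fun _ => ⟨fun h w hw hlt => ?_, fun h w' hw' hlt => ?_⟩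
  · exact h (e w) (e.map_adj_iff.mpr hw) (by rwa [idx_map e.injective, idx_map e.injective])
  · obtain ⟨w, -, rfl⟩ := List.mem_map.mp (mem_of_idx_lt hlt)
    rw [idx_map e.injective, idx_map e.injective] at hlt
    exact h w (e.map_adj_iff.mp hw') hlt

end Greedy

section ConnList

variable {V : Type*} {G : SimpleGraph V}

def IsConnList (G : SimpleGraph V) (L : List V) : Prop :=
  L.Nodup ∧ ∀ x ∈ L, 0 < idx L x → ∃ w, idx L w < idx L x ∧ G.Adj w x

lemma isConnOrder_iff {l : List V} : IsConnOrder G l ↔ IsConnList G l ∧ ∀ x, x ∈ l := by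
  refine ⟨fun ⟨hnd, hcov, hconn⟩ => ⟨⟨hnd, fun x hx hpos => ?_⟩, hcov⟩,
    fun ⟨⟨hnd, hconn⟩, hcov⟩ => ⟨hnd, hcov, fun i hi => ?_⟩⟩
  · obtain ⟨j, hj, hadj⟩ := hconn ⟨idx l x, idx_lt_length_iff.mpr hx⟩ hpos
    refine ⟨l.get j, ?_, ?_⟩
    · simpa [List.get_eq_getElem, idx_getElem hnd] using hj
    · simpa [List.get_eq_getElem, getElem_idx] using hadj
  · have hx : idx l (l.get i) = i := by simp [List.get_eq_getElem, idx_getElem hnd]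
    obtain ⟨w, hw, hadj⟩ := hconn _ (List.get_mem l i) (hx ▸ hi)
    refine ⟨⟨idx l w, idx_lt_length_iff.mpr (hcov w)⟩, hx ▸ hw, ?_⟩
    simpa [List.get_eq_getElem, getElem_idx] using hadj

lemma IsConnList.reachable {L : List V} (hL : IsConnList G L) {x y : V} (hx : x ∈ L)
    (hy : y ∈ L) : G.Reachable x y := by
  suffices h : ∀ z ∈ L, G.Reachable (L[0]'(List.length_pos_of_mem hx)) z from
    (h x hx).symm.trans (h y hy)
  intro z hz
  induction hn : idx L z using Nat.strong_induction_on generalizing z with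
  | _ n ih =>
  rcases Nat.eq_zero_or_pos n with rfl | hpos
  · have h0 : idx L z = idx L (L[0]'(List.length_pos_of_mem hx)) := by
      rw [hn, idx_getElem hL.1]
    rw [(idx_inj hz).mp h0]
  · obtain ⟨w, hw, hadj⟩ := hL.2 z hz (hn ▸ hpos)
    exact (ih _ (hn ▸ hw) w (mem_of_idx_lt hw) rfl).trans hadj.reachable

lemma IsConnOrder.connected {l : List V} (hl : IsConnOrder G l) (hne : l ≠ []) :
    G.Connected := by
  obtain ⟨hL, hcov⟩ := isConnOrder_iff.mp hl
  obtain ⟨x, hx⟩ := List.exists_mem_of_ne_nil l hne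
  have : Nonempty V := ⟨x⟩
  exact ⟨fun a b => hL.reachable (hcov a) (hcov b)⟩

lemma IsConnList.of_map_embedding {W : Type*} {H : SimpleGraph W} (e : H ↪g G) {M : List W}
    (h : IsConnList G (M.map e)) : IsConnList H M := by
  refine ⟨h.1.of_map e, fun y hy hpos => ?_⟩
  rw [← idx_map e.injective] at hpos
  obtain ⟨w, hw, hadj⟩ := h.2 (e y) (List.mem_map_of_mem hy) hpos
  obtain ⟨w, -, rfl⟩ := List.mem_map.mp (mem_of_idx_lt hw)
  rw [idx_map e.injective, idx_map e.injective] at hw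
  exact ⟨w, hw, e.map_adj_iff.mp hadj⟩

end ConnList

section Filter

variable {V : Type*} {G : SimpleGraph V} {l : List V} {p : V → Bool}

def IsEarlierClosed (G : SimpleGraph V) (l : List V) (p : V → Bool) : Prop :=
  ∀ x ∈ l, p x → ∀ w, G.Adj w x → idx l w < idx l x → p w

lemma idx_lt_iff_idx_filter_lt (hl : l.Nodup)
    (hp : IsEarlierClosed G l p)
    {x w : V} (hx : x ∈ l.filter p) (hw : G.Adj w x) :
    idx l w < idx l x ↔ idx (l.filter p) w < idx (l.filter p) x := by
  have hxp := List.mem_filter.mp hx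
  constructor
  · intro h
    have hw' : w ∈ l.filter p :=
      List.mem_filter.mpr ⟨mem_of_idx_lt h, hp x hxp.1 hxp.2 w hw h⟩
    exact ((List.filter_sublist).idx_lt_idx_iff hl hw' hx).mpr h
  · intro h
    exact ((List.filter_sublist).idx_lt_idx_iff hl (mem_of_idx_lt h) hx).mp h

lemma IsConnList.filter (hl : IsConnList G l)
    (hp : IsEarlierClosed G l p) :
    IsConnList G (l.filter p) := by
  refine ⟨hl.1.filter p, fun x hx hpos => ?_⟩
  obtain ⟨y, t, ht⟩ := List.exists_cons_of_ne_nil (List.ne_nil_of_mem hx)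
  have hy : y ∈ l.filter p := ht ▸ List.mem_cons_self
  have hy0 : idx (l.filter p) y = 0 := by rw [ht, idx_cons, if_pos rfl]
  have hlpos : idx l y < idx l x :=
    ((List.filter_sublist).idx_lt_idx_iff hl.1 hy hx).mp (hy0 ▸ hpos)
  obtain ⟨w, hw, hadj⟩ := hl.2 x (List.mem_filter.mp hx).1 (by omega)
  exact ⟨w, (idx_lt_iff_idx_filter_lt hl.1 hp hx hadj).mp hw, hadj⟩

lemma greedy_filter (hl : l.Nodup)
    (hp : IsEarlierClosed G l p)
    {x : V} (hx : x ∈ l.filter p) : greedy G (l.filter p) x = greedy G l x := by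
  refine greedy_eq_of_forall_eq_firstFit (hl.filter p) (fun y hy => ?_) hx
  rw [greedy_eq_firstFit hl (List.mem_filter.mp hy).1]
  exact firstFit_congr (fun w hw => idx_lt_iff_idx_filter_lt hl hp hy hw.symm) fun _ _ _ => rfl

end Filter

section Induce

variable {V : Type*} {G : SimpleGraph V}

lemma IsConnList.exists_isConnOrder_induce {L : List V} (hL : IsConnList G L) {s : Set V}
    (hs : ∀ x, x ∈ L ↔ x ∈ s) :
    ∃ M : List ↥s, M.map Subtype.val = L ∧ IsConnOrder (G.induce s) M ∧
      ∀ y : ↥s, greedy (G.induce s) M y = greedy G L y := by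
  lift L to List ↥s using fun x hx => (hs x).mp hx with M
  have hmem : ∀ y : ↥s, y ∈ M := fun y =>
    List.mem_map.mp ((hs y).mpr y.2) |>.elim fun _ ⟨hy', h⟩ => Subtype.ext h ▸ hy'
  let e := SimpleGraph.Embedding.induce (G := G) s
  have hM : IsConnList (G.induce s) M := hL.of_map_embedding e
  exact ⟨M, rfl, isConnOrder_iff.mpr ⟨hM, hmem⟩,
    fun y => (greedy_map_embedding e hM.1 (hmem y)).symm⟩

end Induce

section Chi

variable {V W : Type*} [Fintype V] [Fintype W]

lemma chi_le_of_embedding {G : SimpleGraph V} {H : SimpleGraph W} (e : H ↪g G) :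
    chi H ≤ chi G :=
  Nat.sInf_le ((Nat.sInf_mem (s := {n | G.Colorable n}) ⟨_, G.colorable_of_fintype⟩).of_hom
    e.toHom)

lemma Good.greedy_le_chi {H : SimpleGraph W} (hH : Good H) {M : List W} (hM : IsConnOrder H M)
    (hne : M ≠ []) (y : W) : greedy H M y ≤ chi H := by
  obtain ⟨hM, hcov⟩ := isConnOrder_iff.mp hM
  obtain ⟨M', hM'M, hM', hgreedy⟩ :=
    hM.exists_isConnOrder_induce (s := ((Finset.univ : Finset W) : Set W)) (by simp [hcov])
  have hconn := hM'.connected (by rintro rfl; exact hne hM'M.symm)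
  calc greedy H M y = greedy _ M' ⟨y, by simp⟩ := (hgreedy ⟨y, by simp⟩).symm
    _ ≤ chi _ := hH _ hconn M' hM' _
    _ ≤ chi H := chi_le_of_embedding (SimpleGraph.Embedding.induce _)

lemma MinimallyBad.greedy_le_chi {G : SimpleGraph V} (hmin : MinimallyBad G) {L : List V}
    (hL : IsConnList G L) {x d : V} (hx : x ∈ L) (hd : d ∉ L) : greedy G L x ≤ chi G := by
  classical
  obtain ⟨M, hML, hM, hgreedy⟩ :=
    hL.exists_isConnOrder_induce (s := (L.toFinset : Set V)) (by simp)
  have hne : M ≠ [] := by rintro rfl; simp [← hML] at hx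
  have hs : L.toFinset ≠ Finset.univ := fun h =>
    hd (List.mem_toFinset.mp (h ▸ Finset.mem_univ d))
  have hxs : x ∈ (L.toFinset : Set V) := by simpa using hx
  calc greedy G L x = greedy _ M ⟨x, hxs⟩ := (hgreedy ⟨x, hxs⟩).symm
    _ ≤ chi _ := (hmin.2 _ hs (hM.connected hne)).greedy_le_chi hM hne _
    _ ≤ chi G := chi_le_of_embedding (SimpleGraph.Embedding.induce _)

end Chi

section CliqueFirst

variable {V : Type*} {G : SimpleGraph V} {l : List V}

lemma surjOn_greedy_of_isClique (hl : l.Nodup) (hcov : ∀ x, x ∈ l) {A : Finset V}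
    (hA : G.IsClique (A : Set V)) (hcol : ∀ a ∈ A, greedy G l a ≤ A.card) :
    Set.SurjOn (greedy G l) A (Finset.Icc 1 A.card) :=
  Finset.surjOn_of_injOn_of_card_le _
    (fun a ha => Finset.mem_Icc.mpr ⟨one_le_greedy hl (hcov a), hcol a ha⟩)
    (fun a ha b hb h => by_contra fun hab => greedy_ne_of_adj hl (hcov a) (hcov b) (hA ha hb hab) h)
    (by simp)

noncomputable def cliqueFirst (G : SimpleGraph V) (l : List V) (A : Finset V) (p : V → Bool) :
    List V :=
  (A.toList.mergeSort fun a b => greedy G l a ≤ greedy G l b) ++ l.filter p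

variable {A : Finset V} {p : V → Bool}

lemma mem_cliqueFirst {x : V} : x ∈ cliqueFirst G l A p ↔ x ∈ A ∨ x ∈ l.filter p := by
  rw [cliqueFirst, List.mem_append, List.mem_mergeSort, Finset.mem_toList]

lemma nodup_cliqueFirst (hl : l.Nodup) (hpA : ∀ x, p x → x ∉ A) :
    (cliqueFirst G l A p).Nodup := by
  refine List.nodup_append.mpr ⟨(List.mergeSort_perm _ _).nodup_iff.mpr A.nodup_toList,
    hl.filter p, fun a ha b hb hab => ?_⟩
  rw [List.mem_mergeSort, Finset.mem_toList] at ha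
  exact hpA b (List.mem_filter.mp hb).2 (hab ▸ ha)

lemma idx_cliqueFirst_of_mem {a : V} (ha : a ∈ A) :
    idx (cliqueFirst G l A p) a < A.card := by
  have hQ : a ∈ A.toList.mergeSort fun a b => greedy G l a ≤ greedy G l b := by simpa using ha
  rw [cliqueFirst, idx_append_of_mem hQ]
  simpa using idx_lt_length_iff.mpr hQ

lemma idx_cliqueFirst_of_not_mem {x : V} (hx : x ∉ A) :
    idx (cliqueFirst G l A p) x = A.card + idx (l.filter p) x := by
  rw [cliqueFirst, idx_append_of_not_mem (by simpa using hx), List.length_mergeSort,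
    Finset.length_toList]

lemma idx_cliqueFirst_lt_of_greedy_lt {a b : V} (ha : a ∈ A) (hb : b ∈ A)
    (h : greedy G l a < greedy G l b) :
    idx (cliqueFirst G l A p) a < idx (cliqueFirst G l A p) b := by
  rw [cliqueFirst, idx_append_of_mem (by simpa using ha), idx_append_of_mem (by simpa using hb)]
  refine (List.pairwise_mergeSort (fun _ _ _ h₁ h₂ => ?_) (fun _ _ => ?_) _).idx_lt_idx
    (by simpa using ha) (by simpa using hb) (by rintro rfl; omega) (by simpa using h)
  · simp only [decide_eq_true_eq] at h₁ h₂ ⊢; omega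
  · simp only [Bool.or_eq_true, decide_eq_true_eq]; omega

lemma idx_lt_iff_idx_cliqueFirst_lt (hl : l.Nodup) (hcov : ∀ x, x ∈ l)
    (hpA : ∀ x, p x → x ∉ A) (hclosed : ∀ x, p x → ∀ w, G.Adj w x → w ∈ A ∨ p w)
    (hbefore : ∀ x, p x → ∀ a ∈ A, idx l a < idx l x) {x w : V} (hx : p x)
    (hw : G.Adj w x) :
    idx l w < idx l x ↔ idx (cliqueFirst G l A p) w < idx (cliqueFirst G l A p) x := by
  rw [idx_cliqueFirst_of_not_mem (hpA x hx)]
  rcases hclosed x hx w hw with hwA | hpw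
  · have := idx_cliqueFirst_of_mem (G := G) (l := l) (p := p) hwA
    exact iff_of_true (hbefore x hx w hwA) (by omega)
  · rw [idx_cliqueFirst_of_not_mem (hpA w hpw), Nat.add_lt_add_iff_left]
    exact (List.filter_sublist.idx_lt_idx_iff hl (List.mem_filter.mpr ⟨hcov w, hpw⟩)
      (List.mem_filter.mpr ⟨hcov x, hx⟩)).symm

lemma isConnList_cliqueFirst (hl : IsConnList G l) (hcov : ∀ x, x ∈ l)
    (hA : G.IsClique (A : Set V)) (hAne : A.Nonempty) (hpA : ∀ x, p x → x ∉ A)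
    (hclosed : ∀ x, p x → ∀ w, G.Adj w x → w ∈ A ∨ p w)
    (hbefore : ∀ x, p x → ∀ a ∈ A, idx l a < idx l x) :
    IsConnList G (cliqueFirst G l A p) := by
  refine ⟨nodup_cliqueFirst hl.1 hpA, fun x hx hpos => ?_⟩
  rcases mem_cliqueFirst.mp hx with hxA | hxp
  · have hlen : 0 < (cliqueFirst G l A p).length := List.length_pos_of_mem hx
    have hz0 := idx_getElem (nodup_cliqueFirst hl.1 hpA) 0 hlen
    set z := (cliqueFirst G l A p)[0]
    have hzA : z ∈ A := by
      by_contra hzA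
      rw [idx_cliqueFirst_of_not_mem hzA] at hz0
      have := Finset.card_pos.mpr hAne
      omega
    exact ⟨z, hz0 ▸ hpos, hA hzA hxA (by rintro rfl; omega)⟩
  · have hpx := (List.mem_filter.mp hxp).2
    obtain ⟨a, ha⟩ := hAne
    obtain ⟨w, hw, hadj⟩ := hl.2 x (hcov x) (by have := hbefore x hpx a ha; omega)
    exact ⟨w, (idx_lt_iff_idx_cliqueFirst_lt hl.1 hcov hpA hclosed hbefore hpx hadj).mp hw,
      hadj⟩

lemma greedy_cliqueFirst (hl : l.Nodup) (hcov : ∀ x, x ∈ l)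
    (hA : G.IsClique (A : Set V)) (hcol : ∀ a ∈ A, greedy G l a ≤ A.card)
    (hpA : ∀ x, p x → x ∉ A) (hclosed : ∀ x, p x → ∀ w, G.Adj w x → w ∈ A ∨ p w)
    (hbefore : ∀ x, p x → ∀ a ∈ A, idx l a < idx l x) {x : V}
    (hx : x ∈ cliqueFirst G l A p) :
    greedy G (cliqueFirst G l A p) x = greedy G l x := by
  refine greedy_eq_of_forall_eq_firstFit (nodup_cliqueFirst hl hpA) (fun y hy => ?_) hx
  rcases mem_cliqueFirst.mp hy with hyA | hyp
  · symm
    refine IsLeast.csInf_eq ⟨⟨one_le_greedy hl (hcov y), fun w hw _ =>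
      greedy_ne_of_adj hl (hcov w) (hcov y) hw.symm⟩, fun c ⟨hc, hfree⟩ => ?_⟩
    by_contra! hlt
    obtain ⟨a, ha, rfl⟩ := surjOn_greedy_of_isClique hl hcov hA hcol
      (Finset.mem_Icc.mpr ⟨hc, (hlt.trans_le (hcol y hyA)).le⟩)
    exact hfree a (hA hyA ha (by rintro rfl; omega))
      (idx_cliqueFirst_lt_of_greedy_lt ha hyA hlt) rfl
  · rw [greedy_eq_firstFit hl (hcov y)]
    exact firstFit_congr (fun w hw => idx_lt_iff_idx_cliqueFirst_lt hl hcov hpA hclosed hbefore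
      (List.mem_filter.mp hyp).2 hw.symm) fun _ _ _ => rfl

end CliqueFirst

namespace SimpleGraph.ConnectedComponent

variable {V : Type*} {G : SimpleGraph V} {T : Set V} (c : (G.induce T).ConnectedComponent)

lemma mem_image_supp_of_adj {x w : V} (hx : x ∈ Subtype.val '' c.supp) (hw : w ∈ T)
    (hadj : G.Adj x w) : w ∈ Subtype.val '' c.supp := by
  obtain ⟨x, hxc, rfl⟩ := hx
  exact ⟨⟨w, hw⟩, c.mem_supp_of_adj_mem_supp hxc hadj, rfl⟩

lemma exists_not_mem_image_supp (h : ¬ (G.induce T).Preconnected) :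
    ∃ d ∈ T, d ∉ Subtype.val '' c.supp := by
  by_contra! hall
  exact h fun a b => c.reachable_of_mem_supp
    (by simpa using hall a a.2) (by simpa using hall b b.2)

end SimpleGraph.ConnectedComponent

section CliqueCutset

variable {V : Type*} [Fintype V] {G : SimpleGraph V} {l : List V} {S : Finset V} {K : Set V}
  {v : V}

lemma MinimallyBad.greedy_le_chi_of_not_mem (hmin : MinimallyBad G) (hl : IsConnList G l)
    (hcov : ∀ x, x ∈ l) (hvK : v ∈ K)
    (hK : ∀ x ∈ K, ∀ w, G.Adj w x → w ∈ S ∨ w ∈ K)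
    (hSv : ∀ u ∈ S, idx l u < idx l v) (hvmin : ∀ u ∈ K, idx l v ≤ idx l u) {x : V}
    (hx : x ∉ K) : greedy G l x ≤ chi G := by
  classical
  have hclosed : IsEarlierClosed G l fun y => decide (y ∉ K) := by
    intro y _ hy w hadj hlt
    simp only [decide_eq_true_eq] at hy ⊢
    intro hwK
    have hyS : y ∈ S := (hK w hwK y hadj.symm).resolve_right hy
    have := hSv y hyS
    have := hvmin w hwK
    omega
  have hxl : x ∈ l.filter fun y => decide (y ∉ K) := List.mem_filter.mpr ⟨hcov x, by simpa⟩
  rw [← greedy_filter hl.1 hclosed hxl]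
  exact hmin.greedy_le_chi (hl.filter hclosed) hxl (d := v) (by simp [hvK])

lemma MinimallyBad.greedy_le_chi_of_mem [DecidableEq V] (hmin : MinimallyBad G)
    (hl : IsConnList G l) (hcov : ∀ x, x ∈ l) (hclique : G.IsClique (insert v S : Finset V))
    (hvK : v ∈ K) (hKS : ∀ x ∈ K, x ∉ S)
    (hK : ∀ x ∈ K, ∀ w, G.Adj w x → w ∈ S ∨ w ∈ K)
    (hSv : ∀ u ∈ S, idx l u < idx l v) (hvmin : ∀ u ∈ K, idx l v ≤ idx l u)
    (hcol : ∀ u ∈ insert v S, greedy G l u ≤ S.card + 1) {d : V} (hdS : d ∉ S)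
    (hdK : d ∉ K) {x : V} (hx : x ∈ K) : greedy G l x ≤ chi G := by
  classical
  set p : V → Bool := fun y => decide (y ∈ K ∧ y ≠ v)
  have hp : ∀ y, p y ↔ y ∈ K ∧ y ≠ v := fun y => decide_eq_true_iff
  have hpA : ∀ y, p y → y ∉ insert v S := by
    intro y hy hyA
    obtain ⟨hyK, hyv⟩ := (hp y).mp hy
    exact (Finset.mem_insert.mp hyA).elim hyv (hKS y hyK)
  have hclosed : ∀ y, p y → ∀ w, G.Adj w y → w ∈ insert v S ∨ p w := by
    intro y hy w hadj
    rcases hK y ((hp y).mp hy).1 w hadj with hwS | hwK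
    · exact .inl (Finset.mem_insert_of_mem hwS)
    · by_cases hwv : w = v
      · exact .inl (hwv ▸ Finset.mem_insert_self v S)
      · exact .inr ((hp w).mpr ⟨hwK, hwv⟩)
  have hbefore : ∀ y, p y → ∀ a ∈ insert v S, idx l a < idx l y := by
    intro y hy a ha
    obtain ⟨hyK, hyv⟩ := (hp y).mp hy
    rcases Finset.mem_insert.mp ha with rfl | haS
    · exact (hvmin y hyK).lt_of_ne fun h => hyv ((idx_inj (hcov a)).mp h).symm
    · exact (hSv a haS).trans_le (hvmin y hyK)
  have hcard : (insert v S).card = S.card + 1 := Finset.card_insert_of_notMem (hKS v hvK)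
  have hxL : x ∈ cliqueFirst G l (insert v S) p := by
    by_cases hxv : x = v
    · exact mem_cliqueFirst.mpr (.inl (hxv ▸ Finset.mem_insert_self v S))
    · exact mem_cliqueFirst.mpr (.inr (List.mem_filter.mpr ⟨hcov x, (hp x).mpr ⟨hx, hxv⟩⟩))
  rw [← greedy_cliqueFirst hl.1 hcov hclique (hcard ▸ hcol) hpA hclosed hbefore hxL]
  refine hmin.greedy_le_chi (isConnList_cliqueFirst hl hcov hclique (Finset.insert_nonempty _ _)
    hpA hclosed hbefore) hxL (d := d) ?_
  have hdv : d ≠ v := fun h => hdK (h ▸ hvK)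
  simp [mem_cliqueFirst, hdS, hdv, hp, hdK]

end CliqueCutset

theorem stmt7 {V : Type*} [Fintype V] (G : SimpleGraph V) (l : List V)
    (hmin : MinimallyBad G) (hbad : BadOrder G l)
    (S : Finset V) (hclique : G.IsClique (↑S : Set V))
    (hcut : ¬ (G.induce ((↑S : Set V)ᶜ)).Preconnected)
    (c : (G.induce ((↑S : Set V)ᶜ)).ConnectedComponent)
    (v : V) (hv : v ∈ Subtype.val '' c.supp)
    (hvmin : ∀ u ∈ Subtype.val '' c.supp, idx l v ≤ idx l u)
    (hSv : ∀ u ∈ S, idx l u < idx l v)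
    (hcomplete : ∀ u ∈ S, G.Adj v u) :
    ∃ u : V, (u ∈ S ∨ u = v) ∧ S.card + 1 < greedy G l u := by
  classical
  obtain ⟨hl, hnotgood⟩ := hbad
  obtain ⟨hl, hcov⟩ := isConnOrder_iff.mp hl
  have hKS : ∀ x ∈ Subtype.val '' c.supp, x ∉ S := by
    rintro _ ⟨y, -, rfl⟩
    exact y.2
  have hK : ∀ x ∈ Subtype.val '' c.supp, ∀ w, G.Adj w x →
      w ∈ S ∨ w ∈ Subtype.val '' c.supp :=
    fun x hx w hw => or_iff_not_imp_left.mpr fun hwS => c.mem_image_supp_of_adj hx hwS hw.symm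
  have hA : G.IsClique (insert v S : Finset V) := by
    rw [Finset.coe_insert]
    exact hclique.insert fun u hu _ => hcomplete u hu
  obtain ⟨d, hdS, hdK⟩ := c.exists_not_mem_image_supp hcut
  by_contra! hcol
  refine hnotgood fun x => ?_
  by_cases hx : x ∈ Subtype.val '' c.supp
  · exact hmin.greedy_le_chi_of_mem hl hcov hA hv hKS hK hSv hvmin
      (fun u hu => hcol u (by simpa [or_comm] using hu)) hdS hdK hx
  · exact hmin.greedy_le_chi_of_not_mem hl hcov hv hK hSv hvmin hx
end
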